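/- arXiv:2312.04658 — 2 statements merged into one kernel-verified Lean document; each statement's English description precedes it below -/
import Mathlib

section
/- Let N ≥ 2 and 1 ≤ k ≤ N be integers and set a := (k−1)/(N−1). If b is a random variable with the Beta distribution with parameters (k, N+1−k), i.e. with density x^{k−1}(1−x)^{N−k} · N!/((k−1)!(N−k)!) on (0,1), then E[ (a/b)^{k−1} · ((1−a)/(1−b))^{N−k} ] = a^{k−1} (1−a)^{N−k} · N! / ((k−1)! (N−k)!); equivalently, E[ exp( (N−1) · kl(a ‖ b) ) ] equals the Beta(k, N+1−k) density evaluated at the point a. -/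
open MeasureTheory Real

/-- KL divergence between Bernoulli distributions with success probabilities `p` and `q`
(with the convention `0 * log 0 = 0`, which holds for `Real.log`). -/
noncomputable def bernKL (p q : ℝ) : ℝ :=
  p * Real.log (p / q) + (1 - p) * Real.log ((1 - p) / (1 - q))

/-- The Beta distribution with integer parameters `(k, N + 1 - k)`, with density
`x^(k-1) (1-x)^(N-k) · N! / ((k-1)! (N-k)!)` on `(0, 1)`. -/
noncomputable def betaIntMeasure (N k : ℕ) : Measure ℝ :=
  volume.withDensity fun x =>
    ENNReal.ofReal <|
      if x ∈ Set.Ioo (0 : ℝ) 1 then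
        x ^ (k - 1) * (1 - x) ^ (N - k) *
          ((N.factorial : ℝ) / ((k - 1).factorial * (N - k).factorial))
      else 0

/-!
Against the `Beta(k, N + 1 - k)` density, the integrand `(a/x)^(k-1) ((1-a)/(1-x))^(N-k)` is the
ratio of the density at `a` to the density at `x`, so its expectation is the density at `a` times
the mass of `(0, 1)`. Because `(N-1) a = k-1` and `(N-1)(1-a) = N-k` are natural numbers,
`exp ((N-1) kl(a‖x))` is that same ratio.
-/

open Set
open scoped ENNReal

noncomputable def betaIntDensity (N k : ℕ) (x : ℝ) : ℝ :=
  x ^ (k - 1) * (1 - x) ^ (N - k) *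
    ((N.factorial : ℝ) / ((k - 1).factorial * (N - k).factorial))

lemma betaIntDensity_nonneg (N k : ℕ) {x : ℝ} (hx : x ∈ Icc (0 : ℝ) 1) :
    0 ≤ betaIntDensity N k x := by
  obtain ⟨hx0, hx1⟩ := hx
  have : 0 ≤ 1 - x := sub_nonneg.2 hx1
  unfold betaIntDensity
  positivity

lemma betaIntDensity_mul_likelihoodRatio (N k : ℕ) (p : ℝ) {x : ℝ} (hx0 : x ≠ 0) (hx1 : x ≠ 1) :
    betaIntDensity N k x * ((p / x) ^ (k - 1) * ((1 - p) / (1 - x)) ^ (N - k)) =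
      betaIntDensity N k p := by
  have hx1' : 1 - x ≠ 0 := sub_ne_zero.2 hx1.symm
  unfold betaIntDensity
  rw [div_pow, div_pow]
  field_simp

lemma betaIntMeasure_eq_withDensity (N k : ℕ) :
    betaIntMeasure N k = (volume.restrict (Ioo 0 1)).withDensity
      fun x => ((betaIntDensity N k x).toNNReal : ℝ≥0∞) := by
  rw [← withDensity_indicator measurableSet_Ioo, betaIntMeasure]
  congr 1
  funext x
  by_cases hx : x ∈ Ioo (0 : ℝ) 1
  · simp [hx, betaIntDensity, ENNReal.ofReal]
  · simp [hx]

lemma ae_mem_Ioo_betaIntMeasure (N k : ℕ) : ∀ᵐ x ∂betaIntMeasure N k, x ∈ Ioo (0 : ℝ) 1 := by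
  rw [betaIntMeasure_eq_withDensity]
  exact (withDensity_absolutelyContinuous _ _).ae_le (ae_restrict_mem measurableSet_Ioo)

lemma integral_betaIntMeasure (N k : ℕ) (g : ℝ → ℝ) :
    ∫ x, g x ∂betaIntMeasure N k = ∫ x in Ioo 0 1, betaIntDensity N k x * g x := by
  have hmeas : Measurable fun x => (betaIntDensity N k x).toNNReal := by
    unfold betaIntDensity; fun_prop
  rw [betaIntMeasure_eq_withDensity, integral_withDensity_eq_integral_smul hmeas]
  refine setIntegral_congr_fun measurableSet_Ioo fun x hx => ?_
  rw [NNReal.smul_def, smul_eq_mul,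
    Real.coe_toNNReal _ (betaIntDensity_nonneg N k (Ioo_subset_Icc_self hx))]

lemma exp_natCast_mul_log {y : ℝ} {n : ℕ} (h : 0 < y ∨ n = 0) :
    exp (n * log y) = y ^ n := by
  rcases h with hy | rfl
  · rw [exp_nat_mul, exp_log hy]
  · simp

lemma exp_mul_bernKL {m p q : ℝ} {i j : ℕ} (hi : m * p = i) (hj : m * (1 - p) = j)
    (hp : p ∈ Icc (0 : ℝ) 1) (hq : q ∈ Ioo (0 : ℝ) 1) :
    exp (m * bernKL p q) = (p / q) ^ i * ((1 - p) / (1 - q)) ^ j := by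
  have hq' : 0 < 1 - q := sub_pos.2 hq.2
  rw [bernKL, mul_add, ← mul_assoc, ← mul_assoc, hi, hj, exp_add,
    exp_natCast_mul_log, exp_natCast_mul_log]
  -- `p = 0` forces `i = 0`, so the junk value `log 0 = 0` meets `0 ^ 0 = 1` (and likewise `p = 1`)
  · rcases (sub_nonneg.2 hp.2).eq_or_lt with h | h
    · exact .inr (Nat.cast_eq_zero.1 (by rw [← hj, ← h, mul_zero]))
    · exact .inl (div_pos h hq')
  · rcases hp.1.eq_or_lt with h | h
    · exact .inr (Nat.cast_eq_zero.1 (by rw [← hi, ← h, mul_zero]))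
    · exact .inl (div_pos h hq.1)

theorem beta_exponential_moment_of_bernKL_general
    {Ω : Type*} [MeasurableSpace Ω] (ν : Measure Ω)
    (N k : ℕ) (hk1 : 1 ≤ k) (hkN : k ≤ N)
    (a : ℝ) (ha : a = ((k : ℝ) - 1) / ((N : ℝ) - 1))
    (b : Ω → ℝ) (hb : Measurable b) (hlaw : ν.map b = betaIntMeasure N k) :
    (∫ ω, (a / b ω) ^ (k - 1) * ((1 - a) / (1 - b ω)) ^ (N - k) ∂ν =
        a ^ (k - 1) * (1 - a) ^ (N - k) *
          ((N.factorial : ℝ) / ((k - 1).factorial * (N - k).factorial))) ∧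
    (∫ ω, Real.exp (((N : ℝ) - 1) * bernKL a (b ω)) ∂ν =
        a ^ (k - 1) * (1 - a) ^ (N - k) *
          ((N.factorial : ℝ) / ((k - 1).factorial * (N - k).factorial))) := by
  have hk1' : (1 : ℝ) ≤ k := by exact_mod_cast hk1
  have hkN' : (k : ℝ) ≤ N := by exact_mod_cast hkN
  have hsuccesses : ((N : ℝ) - 1) * a = (k - 1 : ℕ) := by
    rw [ha, Nat.cast_sub hk1, Nat.cast_one]
    exact mul_div_cancel_of_imp' fun h => by linarith
  have hfailures : ((N : ℝ) - 1) * (1 - a) = (N - k : ℕ) := by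
    rw [mul_one_sub, hsuccesses, Nat.cast_sub hk1, Nat.cast_sub hkN]
    ring
  have ha_mem : a ∈ Icc (0 : ℝ) 1 := by
    rw [ha]
    exact ⟨div_nonneg (by linarith) (by linarith), div_le_one_of_le₀ (by linarith) (by linarith)⟩
  have hb_mem : ∀ᵐ ω ∂ν, b ω ∈ Ioo (0 : ℝ) 1 :=
    ae_of_ae_map hb.aemeasurable (hlaw ▸ ae_mem_Ioo_betaIntMeasure N k)
  have hmoment : ∫ ω, (a / b ω) ^ (k - 1) * ((1 - a) / (1 - b ω)) ^ (N - k) ∂ν =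
      betaIntDensity N k a := by
    rw [← integral_map (f := fun x => (a / x) ^ (k - 1) * ((1 - a) / (1 - x)) ^ (N - k))
      hb.aemeasurable (by fun_prop), hlaw, integral_betaIntMeasure,
      setIntegral_congr_fun measurableSet_Ioo fun x hx =>
        betaIntDensity_mul_likelihoodRatio N k a hx.1.ne' hx.2.ne]
    simp
  refine ⟨hmoment, (integral_congr_ae ?_).trans hmoment⟩
  filter_upwards [hb_mem] with ω hω
  exact exp_mul_bernKL hsuccesses hfailures ha_mem hω

/-- The key moment identity for the Beta distribution (equation (14) in the proof of
Theorem 1): if `b ~ Beta(k, N+1-k)` and `a = (k-1)/(N-1)`, then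
`E[(a/b)^(k-1) ((1-a)/(1-b))^(N-k)]` equals the `Beta(k, N+1-k)` density evaluated at `a`;
equivalently, `E[exp((N-1)·kl(a‖b))]` equals the same value. -/
theorem beta_exponential_moment_of_bernKL
    {Ω : Type*} [MeasurableSpace Ω] (ν : Measure Ω) [IsProbabilityMeasure ν]
    (N k : ℕ) (hN : 2 ≤ N) (hk1 : 1 ≤ k) (hkN : k ≤ N)
    (a : ℝ) (ha : a = ((k : ℝ) - 1) / ((N : ℝ) - 1))
    (b : Ω → ℝ) (hb : Measurable b) (hlaw : ν.map b = betaIntMeasure N k) :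
    (∫ ω, (a / b ω) ^ (k - 1) * ((1 - a) / (1 - b ω)) ^ (N - k) ∂ν =
        a ^ (k - 1) * (1 - a) ^ (N - k) *
          ((N.factorial : ℝ) / ((k - 1).factorial * (N - k).factorial))) ∧
    (∫ ω, Real.exp (((N : ℝ) - 1) * bernKL a (b ω)) ∂ν =
        a ^ (k - 1) * (1 - a) ^ (N - k) *
          ((N.factorial : ℝ) / ((k - 1).factorial * (N - k).factorial))) :=
  beta_exponential_moment_of_bernKL_general ν N k hk1 hkN a ha b hb hlaw
end

section
/- Let (Ω, ℱ, ν) be a probability space, Θ a measurable parameter space with prior probability measure P, N ≥ 2 an integer, γ ∈ (0,1), and Ψ : Θ × Ω → ℝ jointly measurable such that for every fixed θ ∈ Θ, ∫_Ω exp( 2(N−1) Ψ(θ, ω)² ) dν(ω) ≤ 2N. Then with ν-probability at least 1 − γ over ω, simultaneously for all probability measures Q on Θ: ∫_Θ Ψ(θ, ω) dQ(θ) ≤ √( ( KL(Q‖P) + log(2N/γ) ) / ( 2(N−1) ) ). -/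
/-!
For `Φ = 2(N-1)Ψ²`, Fubini and Markov's inequality show that outside a set of `ν`-measure at
most `γ` the prior exponential moment `∫ exp (Φ θ ω) dP(θ)` is below `2N/γ`. For such `ω`, the
Donsker–Varadhan inequality `∫ Φ dQ ≤ KL(Q‖P) + log ∫ exp Φ dP` bounds `∫ Ψ² dQ` for all
posteriors `Q` at once, and Jensen's inequality `∫ Ψ dQ ≤ √(∫ Ψ² dQ)` concludes. Integrability
of `Φ` under `Q` comes from `Φ ≤ log (dQ/dP) + exp Φ / (dQ/dP)`, whose right-hand side is
`Q`-integrable.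
-/

open MeasureTheory Real

open Classical in
/-- Kullback-Leibler divergence between measures: `∫ log (dQ/dP) dQ` when `Q ≪ P`
(and the log-likelihood ratio is integrable), `+∞` otherwise. -/
noncomputable def klDivE {Θ : Type*} [MeasurableSpace Θ] (Q P : Measure Θ) : EReal :=
  if Q ≪ P ∧ Integrable (llr Q P) Q then ((∫ θ, llr Q P θ ∂Q : ℝ) : EReal) else ⊤

open scoped ENNReal

section RelativeEntropy

variable {Θ : Type*} [MeasurableSpace Θ] {Q P : Measure Θ}

lemma klDivE_ne_top_iff : klDivE Q P ≠ ⊤ ↔ Q ≪ P ∧ Integrable (llr Q P) Q := by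
  by_cases h : Q ≪ P ∧ Integrable (llr Q P) Q <;> simp [klDivE, h]

lemma toReal_klDivE (hQP : Q ≪ P) (hllr : Integrable (llr Q P) Q) :
    (klDivE Q P).toReal = ∫ θ, llr Q P θ ∂Q := by
  simp [klDivE, hQP, hllr]

lemma integral_llr_nonneg [IsProbabilityMeasure Q] [IsProbabilityMeasure P] (hQP : Q ≪ P)
    (hllr : Integrable (llr Q P) Q) : 0 ≤ ∫ θ, llr Q P θ ∂Q := by
  simpa using InformationTheory.integral_llr_add_sub_measure_univ_nonneg hQP hllr

lemma ae_le_llr_add_exp_mul_inv_rnDeriv [SigmaFinite Q] [SigmaFinite P] (hQP : Q ≪ P)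
    (φ : Θ → ℝ) :
    ∀ᵐ θ ∂Q, φ θ ≤ llr Q P θ + exp (φ θ) * ((Q.rnDeriv P θ).toReal)⁻¹ := by
  filter_upwards [Measure.rnDeriv_pos hQP, hQP.ae_le (Measure.rnDeriv_lt_top Q P)]
    with θ hpos hlt
  have hr : 0 < (Q.rnDeriv P θ).toReal := ENNReal.toReal_pos hpos.ne' hlt.ne
  have h := add_one_le_exp (φ θ - log (Q.rnDeriv P θ).toReal)
  rw [exp_sub, exp_log hr] at h
  rw [llr_def]
  linarith [div_eq_mul_inv (exp (φ θ)) (Q.rnDeriv P θ).toReal]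

lemma integrable_exp_mul_inv_rnDeriv [SigmaFinite Q] [SigmaFinite P] (hQP : Q ≪ P)
    {φ : Θ → ℝ} (hexp : Integrable (fun θ ↦ exp (φ θ)) P) :
    Integrable (fun θ ↦ exp (φ θ) * ((Q.rnDeriv P θ).toReal)⁻¹) Q := by
  refine (integrable_rnDeriv_smul_iff hQP).1 (hexp.mono ?_ ?_)
  · have hr := (Measure.measurable_rnDeriv Q P).ennreal_toReal
    exact hr.aestronglyMeasurable.smul (hexp.1.mul hr.inv.aestronglyMeasurable)
  · filter_upwards with θ
    rw [smul_eq_mul, mul_left_comm, norm_mul, norm_of_nonneg (exp_pos _).le,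
      norm_of_nonneg (by positivity)]
    exact mul_le_of_le_one_right (exp_pos _).le mul_inv_le_one

lemma integrable_of_nonneg_of_integrable_exp [SigmaFinite Q] [SigmaFinite P] (hQP : Q ≪ P)
    (hllr : Integrable (llr Q P) Q) {φ : Θ → ℝ} (hφ : 0 ≤ φ)
    (hexp : Integrable (fun θ ↦ exp (φ θ)) P) : Integrable φ Q := by
  have hφm : AEStronglyMeasurable φ Q := by
    simpa [Function.comp_def] using
      (measurable_log.comp_aemeasurable (hexp.1.mono_ac hQP).aemeasurable).aestronglyMeasurable
  refine (hllr.abs.add (integrable_exp_mul_inv_rnDeriv hQP hexp)).mono' hφm ?_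
  filter_upwards [ae_le_llr_add_exp_mul_inv_rnDeriv hQP φ] with θ hθ
  rw [norm_of_nonneg (hφ θ), Pi.add_apply]
  linarith [le_abs_self (llr Q P θ)]

/-- Donsker–Varadhan: this is Gibbs' inequality for `Q` against the tilted measure
`P.tilted φ`. -/
lemma integral_le_integral_llr_add_log_integral_exp [IsProbabilityMeasure Q]
    [IsProbabilityMeasure P] (hQP : Q ≪ P) (hllr : Integrable (llr Q P) Q) {φ : Θ → ℝ}
    (hφ : Integrable φ Q) (hexp : Integrable (fun θ ↦ exp (φ θ)) P) :
    ∫ θ, φ θ ∂Q ≤ ∫ θ, llr Q P θ ∂Q + log (∫ θ, exp (φ θ) ∂P) := by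
  have := isProbabilityMeasure_tilted hexp
  have h := integral_llr_nonneg (hQP.trans (absolutelyContinuous_tilted hexp))
    (integrable_llr_tilted_right hQP hφ hllr hexp)
  rw [integral_llr_tilted_right hQP hφ hexp hllr] at h
  linarith

end RelativeEntropy

lemma one_sub_lintegral_div_le_measure_lt {Ω : Type*} [MeasurableSpace Ω] {ν : Measure Ω}
    [IsProbabilityMeasure ν] {F : Ω → ℝ≥0∞} (hF : AEMeasurable F ν) {ε : ℝ≥0∞}
    (hε0 : ε ≠ 0) (hεt : ε ≠ ⊤) : 1 - (∫⁻ ω, F ω ∂ν) / ε ≤ ν {ω | F ω < ε} := by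
  have hcover : (Set.univ : Set Ω) = {ω | F ω < ε} ∪ {ω | ε ≤ F ω} := by
    ext ω; simp [lt_or_ge]
  rw [tsub_le_iff_right]
  calc 1 = ν Set.univ := measure_univ.symm
    _ ≤ ν {ω | F ω < ε} + ν {ω | ε ≤ F ω} := hcover ▸ measure_union_le _ _
    _ ≤ _ := by gcongr; exact meas_ge_le_lintegral_div hF hε0 hεt

lemma integrable_exp_and_integral_exp_le_of_lintegral_le {α : Type*} [MeasurableSpace α]
    {μ : Measure α} {φ : α → ℝ} (hφ : AEStronglyMeasurable φ μ) {c : ℝ} (hc : 0 ≤ c)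
    (h : ∫⁻ x, ENNReal.ofReal (exp (φ x)) ∂μ ≤ ENNReal.ofReal c) :
    Integrable (fun x ↦ exp (φ x)) μ ∧ ∫ x, exp (φ x) ∂μ ≤ c := by
  have hpos : 0 ≤ᵐ[μ] fun x ↦ exp (φ x) := Filter.Eventually.of_forall fun _ ↦ (exp_pos _).le
  have hm : AEStronglyMeasurable (fun x ↦ exp (φ x)) μ :=
    continuous_exp.comp_aestronglyMeasurable hφ
  refine ⟨⟨hm, ?_⟩, ?_⟩
  · rw [hasFiniteIntegral_iff_ofReal hpos]
    exact h.trans_lt ENNReal.ofReal_lt_top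
  · rw [integral_eq_lintegral_of_nonneg_ae hpos hm]
    exact ENNReal.toReal_le_of_le_ofReal hc h

lemma integral_le_integral_llr_add_log_of_lintegral_exp_le {Θ : Type*} [MeasurableSpace Θ]
    {Q P : Measure Θ} [IsProbabilityMeasure Q] [IsProbabilityMeasure P] (hQP : Q ≪ P)
    (hllr : Integrable (llr Q P) Q) {φ : Θ → ℝ} (hφm : AEStronglyMeasurable φ P) (hφ0 : 0 ≤ φ)
    {c : ℝ} (hc : 0 ≤ c) (h : ∫⁻ θ, ENNReal.ofReal (exp (φ θ)) ∂P ≤ ENNReal.ofReal c) :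
    Integrable φ Q ∧ ∫ θ, φ θ ∂Q ≤ ∫ θ, llr Q P θ ∂Q + log c := by
  obtain ⟨hexp, hle⟩ := integrable_exp_and_integral_exp_le_of_lintegral_le hφm hc h
  have hφ := integrable_of_nonneg_of_integrable_exp hQP hllr hφ0 hexp
  refine ⟨hφ, (integral_le_integral_llr_add_log_integral_exp hQP hllr hφ hexp).trans ?_⟩
  gcongr
  exact integral_exp_pos hexp

theorem pacBayes_bound_of_lintegral_exp_le {Ω Θ : Type*} [MeasurableSpace Ω]
    [MeasurableSpace Θ] (ν : Measure Ω) [IsProbabilityMeasure ν] (P : Measure Θ)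
    [IsProbabilityMeasure P] {Φ : Θ → Ω → ℝ} (hΦm : Measurable (Function.uncurry Φ))
    (hΦ0 : ∀ θ ω, 0 ≤ Φ θ ω) {C γ : ℝ} (hC : 0 < C) (hγ : 0 < γ)
    (hmom : ∫⁻ θ, ∫⁻ ω, ENNReal.ofReal (exp (Φ θ ω)) ∂ν ∂P ≤ ENNReal.ofReal C) :
    ENNReal.ofReal (1 - γ) ≤ ν {ω | ∀ Q : Measure Θ, IsProbabilityMeasure Q → Q ≪ P →
      Integrable (llr Q P) Q →
        Integrable (Φ · ω) Q ∧ ∫ θ, Φ θ ω ∂Q ≤ ∫ θ, llr Q P θ ∂Q + log (C / γ)} := by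
  set F : Ω → ℝ≥0∞ := fun ω ↦ ∫⁻ θ, ENNReal.ofReal (exp (Φ θ ω)) ∂P
  have hexpm : Measurable fun p : Θ × Ω ↦ ENNReal.ofReal (exp (Φ p.1 p.2)) :=
    hΦm.exp.ennreal_ofReal
  have hF : Measurable F := hexpm.lintegral_prod_left'
  have hFint : ∫⁻ ω, F ω ∂ν ≤ ENNReal.ofReal C := by
    rwa [lintegral_lintegral_swap (f := fun ω θ ↦ ENNReal.ofReal (exp (Φ θ ω)))
      (hexpm.comp measurable_swap).aemeasurable]
  set ε := ENNReal.ofReal (C / γ)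
  have hε0 : ε ≠ 0 := (ENNReal.ofReal_pos.2 (div_pos hC hγ)).ne'
  have hMarkov : ENNReal.ofReal (1 - γ) ≤ ν {ω | F ω < ε} := by
    refine le_trans ?_
      (one_sub_lintegral_div_le_measure_lt hF.aemeasurable hε0 ENNReal.ofReal_ne_top)
    rw [ENNReal.ofReal_sub _ hγ.le, ENNReal.ofReal_one]
    gcongr
    rw [ENNReal.div_le_iff hε0 ENNReal.ofReal_ne_top, ← ENNReal.ofReal_mul hγ.le,
      mul_div_cancel₀ _ hγ.ne']
    exact hFint
  refine hMarkov.trans (measure_mono fun ω hω Q _ hQP hllr ↦ ?_)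
  exact integral_le_integral_llr_add_log_of_lintegral_exp_le hQP hllr
    hΦm.of_uncurry_right.aestronglyMeasurable
    (hΦ0 · ω) (div_pos hC hγ).le (le_of_lt hω)

lemma integral_le_sqrt_integral_sq {α : Type*} [MeasurableSpace α] {μ : Measure α}
    [IsProbabilityMeasure μ] {f : α → ℝ} (hf : AEStronglyMeasurable f μ)
    (hf2 : Integrable (fun x ↦ f x ^ 2) μ) : ∫ x, f x ∂μ ≤ √(∫ x, f x ^ 2 ∂μ) := by
  have hfi : Integrable f μ :=
    ((memLp_two_iff_integrable_sq hf).2 hf2).integrable one_le_two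
  have hsq : (∫ x, f x ∂μ) ^ 2 ≤ ∫ x, f x ^ 2 ∂μ :=
    (even_two.convexOn_pow).map_integral_le (continuous_pow 2).continuousOn isClosed_univ
      (Filter.Eventually.of_forall fun _ ↦ Set.mem_univ _) hfi hf2
  exact (le_abs_self _).trans (abs_le_sqrt hsq)

/-- Uniform-over-posteriors PAC-Bayes bound for variables with bounded exponential
square moment: with probability at least `1 - γ`, simultaneously for all posteriors `Q`,
`∫ Ψ(θ, ω) dQ(θ) ≤ √((KL(Q‖P) + log(2N/γ)) / (2(N-1)))` (the bound being trivially `+∞`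
when `KL(Q‖P) = ∞`). -/
theorem pac_bayes_sq_moment_bound
    {Ω Θ : Type*} [MeasurableSpace Ω] [MeasurableSpace Θ]
    (ν : Measure Ω) [IsProbabilityMeasure ν]
    (P : Measure Θ) [IsProbabilityMeasure P]
    (N : ℕ) (hN : 2 ≤ N) (γ : ℝ) (hγ : γ ∈ Set.Ioo (0 : ℝ) 1)
    (Ψ : Θ → Ω → ℝ) (hΨ : Measurable (Function.uncurry Ψ))
    (hmom : ∀ θ : Θ,
      ∫⁻ ω, ENNReal.ofReal (Real.exp (2 * ((N : ℝ) - 1) * (Ψ θ ω) ^ 2)) ∂ν ≤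
        ENNReal.ofReal (2 * (N : ℝ))) :
    ENNReal.ofReal (1 - γ) ≤
      ν {ω | ∀ Q : Measure Θ, IsProbabilityMeasure Q →
        klDivE Q P = ⊤ ∨
        ∫ θ, Ψ θ ω ∂Q ≤
          Real.sqrt (((klDivE Q P).toReal + Real.log (2 * (N : ℝ) / γ)) /
            (2 * ((N : ℝ) - 1)))} := by
  have hc : (0 : ℝ) < 2 * ((N : ℝ) - 1) := by
    have : (2 : ℝ) ≤ N := by exact_mod_cast hN
    linarith
  have hbound := pacBayes_bound_of_lintegral_exp_le ν P
    (Φ := fun θ ω ↦ 2 * ((N : ℝ) - 1) * Ψ θ ω ^ 2) (C := 2 * N) ((hΨ.pow_const 2).const_mul _)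
    (fun θ ω ↦ by positivity) (by positivity) hγ.1
    ((lintegral_mono hmom).trans (by simp))
  refine hbound.trans (measure_mono fun ω hω Q hQ ↦ ?_)
  rw [or_iff_not_imp_left, ← ne_eq, klDivE_ne_top_iff]
  rintro ⟨hQP, hllr⟩
  obtain ⟨hint, hle⟩ := hω Q hQ hQP hllr
  have hsq : Integrable (fun θ ↦ Ψ θ ω ^ 2) Q :=
    (hint.const_mul _).congr (.of_forall fun θ ↦ inv_mul_cancel_left₀ hc.ne' _)
  refine (integral_le_sqrt_integral_sq hΨ.of_uncurry_right.aestronglyMeasurable hsq).trans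
    (sqrt_le_sqrt ?_)
  rw [toReal_klDivE hQP hllr, le_div_iff₀ hc, mul_comm, ← integral_const_mul]
  exact hle
end
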